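/- The subsets v^{-1}(λ_v + P^+) of the weight lattice P, as v ranges over W, are pairwise disjoint: if v^{-1}(λ_v + σ) = u^{-1}(λ_u + τ) with u,v ∈ W and σ,τ ∈ P^+, then u = v and σ = τ. -/

import Mathlib

/-!
Common setting: a finite crystallographic root system `R` with Weyl group `W` in a
Euclidean space `V` (we identify `𝔞*` with `𝔞 = V` via the inner product), a fixed set
of positive roots `Rpos`, simple roots `Pi`, fundamental weights `fw`, the weight
lattice `P`, dominant weights `Pplus`, and for a subset `I ⊆ Pi` of the simple roots the
parabolic subgroup `W_I`, its positive roots `R_I^+`, `P_I^+`, the set `W^I` of minimal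
coset representatives, lengths, the Bruhat order, the orderings `⪯`, `≤_∅`, `≤_I`, the
group algebra `ℂ[P]`, the orbit sums `m_I(λ)`, the compact torus `A` (encoded abstractly
through its normalized Haar measure and its orthonormal multiplicative characters
`e^λ = ev λ`, `λ ∈ P`), the weight function `δ_k` and the inner product `(·,·)_k`.
-/

open scoped RealInnerProductSpace BigOperators Classical
open MeasureTheory

noncomputable section

variable {V : Type*} [NormedAddCommGroup V] [InnerProductSpace ℝ V] [FiniteDimensional ℝ V]

/-- A finite crystallographic root system in `V`, with a choice of positive roots,
the corresponding simple roots, and the fundamental weights. -/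
structure RootData (V : Type*) [NormedAddCommGroup V] [InnerProductSpace ℝ V] where
  R : Finset V
  Rpos : Finset V
  Pi : Finset V
  fw : V → V
  nonzero : ∀ α ∈ R, α ≠ 0
  reflect_mem : ∀ α ∈ R, ∀ β ∈ R, β - (2 * ⟪β, α⟫ / ⟪α, α⟫) • α ∈ R
  crystallographic : ∀ α ∈ R, ∀ β ∈ R, ∃ n : ℤ, 2 * ⟪β, α⟫ / ⟪α, α⟫ = (n : ℝ)
  pos_subset : Rpos ⊆ R
  pos_or_neg : ∀ α ∈ R, (α ∈ Rpos ↔ ¬ -α ∈ Rpos)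
  simple_subset : Pi ⊆ Rpos
  pos_comb : ∀ α ∈ Rpos, ∃ c : V → ℝ, (∀ β, 0 ≤ c β) ∧ α = ∑ β ∈ Pi, c β • β
  span_R : Submodule.span ℝ (R : Set V) = ⊤
  fw_prop : ∀ α ∈ Pi, ∀ β ∈ Pi, ⟪fw α, (2 / ⟪β, β⟫) • β⟫ = (if α = β then 1 else 0)

/-- The orthogonal reflection `s_α` in the hyperplane orthogonal to `α`. -/
def rRefl (α : V) : V ≃ₗᵢ[ℝ] V := Submodule.reflection (ℝ ∙ α)ᗮ

/-- The reflection group generated by the reflections in the elements of `S`. -/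
def weylGen (S : Finset V) : Subgroup (V ≃ₗᵢ[ℝ] V) :=
  Subgroup.closure { w | ∃ α ∈ S, w = rRefl α }

namespace RootData

variable (D : RootData V)

/-- The Weyl group `W`, generated by the simple reflections. -/
def Weyl : Subgroup (V ≃ₗᵢ[ℝ] V) := Subgroup.closure { w | ∃ α ∈ D.Pi, w = rRefl α }

/-- The parabolic subgroup `W_I` generated by the simple reflections from `I ⊆ Π`. -/
abbrev WeylP (_D : RootData V) (I : Finset V) : Subgroup (V ≃ₗᵢ[ℝ] V) := weylGen I

/-- `R_I^+ = R_I ∩ R^+`, the positive roots of the parabolic subsystem. -/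
def RposI (I : Finset V) : Set V :=
  { α : V | α ∈ D.Rpos ∧ α ∈ Submodule.span ℝ (I : Set V) }

/-- `W^I = {v ∈ W ∣ v(R_I^+) ⊆ R^+}`, the minimal coset representatives of `W/W_I`. -/
def WsetI (I : Finset V) : Set (V ≃ₗᵢ[ℝ] V) :=
  { v | v ∈ D.Weyl ∧ ∀ α ∈ D.RposI I, v α ∈ D.Rpos }

/-- The weight lattice `P = {λ ∣ (λ, α^∨) ∈ ℤ for all α ∈ R}`. -/
def P : Set V := { lam : V | ∀ α ∈ D.R, ∃ n : ℤ, 2 * ⟪lam, α⟫ / ⟪α, α⟫ = (n : ℝ) }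

/-- The dominant weights `P^+`. -/
def Pplus : Set V := { lam ∈ D.P | ∀ α ∈ D.Rpos, 0 ≤ ⟪lam, α⟫ }

/-- `P^- = -P^+`. -/
def Pminus : Set V := { lam ∈ D.P | ∀ α ∈ D.Rpos, ⟪lam, α⟫ ≤ 0 }

/-- `P_I^+ = {λ ∈ P ∣ (λ,α) ≥ 0 for all α ∈ R_I^+}`. -/
def PplusI (I : Finset V) : Set V := { lam ∈ D.P | ∀ α ∈ D.RposI I, 0 ≤ ⟪lam, α⟫ }

/-- `P_I^- = -P_I^+`. -/
def PminusI (I : Finset V) : Set V := { lam ∈ D.P | ∀ α ∈ D.RposI I, ⟪lam, α⟫ ≤ 0 }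

/-- The Steinberg weight `λ_v = Σ_{α ∈ Π, v⁻¹α < 0} ϖ_α`. -/
def steinberg (v : V ≃ₗᵢ[ℝ] V) : V :=
  ∑ α ∈ D.Pi.filter (fun α => v⁻¹ α ∉ D.Rpos), D.fw α

/-- The length of `w` : the minimal length of a word in the simple reflections
expressing `w`. -/
def len (w : V ≃ₗᵢ[ℝ] V) : ℕ :=
  sInf { n | ∃ l : List (V ≃ₗᵢ[ℝ] V),
    (∀ g ∈ l, ∃ α ∈ D.Pi, g = rRefl α) ∧ l.prod = w ∧ l.length = n }

/-- The Bruhat order on `W` (subword property): `u ≤ w` iff some reduced word for `w`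
has a subword which is a word for `u`. -/
def bruhatLE (u w : V ≃ₗᵢ[ℝ] V) : Prop :=
  ∃ l : List (V ≃ₗᵢ[ℝ] V),
    (∀ g ∈ l, ∃ α ∈ D.Pi, g = rRefl α) ∧ l.prod = w ∧ l.length = D.len w ∧
    ∃ l' : List (V ≃ₗᵢ[ℝ] V), l'.Sublist l ∧ l'.prod = u

def Dominant (lam : V) : Prop := ∀ α ∈ D.Rpos, 0 ≤ ⟪lam, α⟫

def AntiDominant (lam : V) : Prop := ∀ α ∈ D.Rpos, ⟪lam, α⟫ ≤ 0

def DominantI (I : Finset V) (lam : V) : Prop := ∀ α ∈ D.RposI I, 0 ≤ ⟪lam, α⟫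

/-- `w = v̄(λ)`, the shortest element of `W` with `w λ₊ = λ` (where `λ₊ = w⁻¹λ` is the
dominant representative of `W·λ`). -/
def IsVbar (lam : V) (w : V ≃ₗᵢ[ℝ] V) : Prop :=
  w ∈ D.Weyl ∧ D.Dominant (w⁻¹ lam) ∧
    ∀ u ∈ D.Weyl, D.Dominant (u⁻¹ lam) → D.len w ≤ D.len u

/-- `w = v(λ)`, the shortest element of `W` with `w λ = λ₋` antidominant. -/
def IsVmin (lam : V) (w : V ≃ₗᵢ[ℝ] V) : Prop :=
  w ∈ D.Weyl ∧ D.AntiDominant (w lam) ∧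
    ∀ u ∈ D.Weyl, D.AntiDominant (u lam) → D.len w ≤ D.len u

/-- `w = v̄_I(λ)`, the shortest element of `W_I` with `w λ_{I,+} = λ`. -/
def IsVbarI (I : Finset V) (lam : V) (w : V ≃ₗᵢ[ℝ] V) : Prop :=
  w ∈ D.WeylP I ∧ D.DominantI I (w⁻¹ lam) ∧
    ∀ u ∈ D.WeylP I, D.DominantI I (u⁻¹ lam) → D.len w ≤ D.len u

/-- `λ ⪯ μ` iff `μ - λ ∈ Q^+`. -/
def preceq (lam mu : V) : Prop :=
  ∃ c : V → ℕ, mu - lam = ∑ α ∈ D.Pi, (c α : ℝ) • α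

/-- The ordering `λ ≤_∅ μ` of Heckman: `λ₊ ≺ μ₊`, or `λ₊ = μ₊` and `v̄(λ) ≤ v̄(μ)` in the
Bruhat order. -/
def leEmpty (lam mu : V) : Prop :=
  ∃ lamP muP : V, lamP ∈ D.Pplus ∧ muP ∈ D.Pplus ∧
    (∃ w ∈ D.Weyl, w lamP = lam) ∧ (∃ w ∈ D.Weyl, w muP = mu) ∧
    ((D.preceq lamP muP ∧ lamP ≠ muP) ∨
      (lamP = muP ∧ ∃ vl vm : V ≃ₗᵢ[ℝ] V,
        D.IsVbar lam vl ∧ D.IsVbar mu vm ∧ D.bruhatLE vl vm))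

def ltEmpty (lam mu : V) : Prop := D.leEmpty lam mu ∧ lam ≠ mu

/-- `≤_I`, the restriction of `≤_∅` to `P_I^+`. -/
def leI (I : Finset V) (lam mu : V) : Prop :=
  lam ∈ D.PplusI I ∧ mu ∈ D.PplusI I ∧ D.leEmpty lam mu

def ltI (I : Finset V) (lam mu : V) : Prop := D.leI I lam mu ∧ lam ≠ mu

/-- `ρ(k) = ½ Σ_{α ∈ R^+} k_α α`. -/
def rho (k : V → ℝ) : V := (1/2 : ℝ) • ∑ α ∈ D.Rpos, k α • α

end RootData

/-- The action of `w ∈ W` on `ℂ[P] ⊆ ℂ[V]`, `e^λ ↦ e^{wλ}`. -/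
def wAct (w : V ≃ₗᵢ[ℝ] V) (f : AddMonoidAlgebra ℂ V) : AddMonoidAlgebra ℂ V :=
  AddMonoidAlgebra.ofCoeff (Finsupp.mapDomain ⇑w f.coeff)

/-- `e^λ ∈ ℂ[V]`. -/
def expw (lam : V) : AddMonoidAlgebra ℂ V := AddMonoidAlgebra.ofCoeff (Finsupp.single lam 1)

namespace RootData

variable (D : RootData V)

/-- The orbit `W_I · λ`. -/
def orbitI (I : Finset V) (lam : V) : Set V := { x | ∃ w ∈ D.WeylP I, w lam = x }

/-- `m_I(λ) = Σ_{μ ∈ W_I·λ} e^μ`. -/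
def mI (I : Finset V) (lam : V) : AddMonoidAlgebra ℂ V :=
  ∑ᶠ mu ∈ D.orbitI I lam, expw mu

/-- `ℂ[P]^H`: the `H`-invariant elements of the group algebra `ℂ[P]` (realized inside
`ℂ[V]` as the elements supported on the weight lattice `P`). -/
def invSet (H : Subgroup (V ≃ₗᵢ[ℝ] V)) : Set (AddMonoidAlgebra ℂ V) :=
  { f | (∀ x ∈ f.coeff.support, x ∈ D.P) ∧ ∀ w ∈ H, wAct w f = f }

end RootData

/-- The compact torus `A = i𝔞/(2πiQ^∨)`, encoded through an abstract probability space
together with the system of characters `ev λ = e^λ : A → ℂ`, `λ ∈ P`; the characters are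
multiplicative in `λ`, unimodular, and orthonormal with respect to the (normalized Haar)
measure `μ`.  This data determines the joint distribution of the characters and hence
all the integrals below agree with those over the actual torus. -/
structure TorusData (D : RootData V) (A : Type*) [MeasurableSpace A]
    (μ : Measure A) where
  ev : V → A → ℂ
  ev_add : ∀ lam ∈ D.P, ∀ mu ∈ D.P, ∀ t, ev (lam + mu) t = ev lam t * ev mu t
  ev_norm : ∀ lam ∈ D.P, ∀ t, ‖ev lam t‖ = 1
  ev_meas : ∀ lam ∈ D.P, Measurable (ev lam)
  ev_orth : ∀ lam ∈ D.P, ∀ mu ∈ D.P,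
    (∫ t, (starRingEnd ℂ) (ev lam t) * ev mu t ∂μ) = if lam = mu then 1 else 0

namespace TorusData

variable {D : RootData V} {A : Type*} [MeasurableSpace A] {μ : Measure A}

/-- Evaluation of a Laurent polynomial `f ∈ ℂ[P]` as a function on the torus. -/
def evalF (T : TorusData D A μ) (f : AddMonoidAlgebra ℂ V) (t : A) : ℂ :=
  Finsupp.sum f.coeff fun lam c => c * T.ev lam t

/-- The weight function `δ_k = ∏_{α∈R}(e^{α/2} - e^{-α/2})^{k_α}
= ∏_{α∈R^+} |e^α - 1|^{2k_α}` on `A` (the two expressions agree since `k` is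
`W`-invariant and `|e^{α/2}-e^{-α/2}|² = |e^α - 1|²` as `|e^{α/2}| = 1`). -/
def deltaK (T : TorusData D A μ) (k : V → ℝ) (t : A) : ℝ :=
  ∏ α ∈ D.Rpos, ‖T.ev α t - 1‖ ^ (2 * k α)

/-- The inner product `(φ,ψ)_k = ∫_A conj(φ(t)) ψ(t) δ_k(t) dt` on `ℂ[P]`. -/
def ipk (T : TorusData D A μ) (k : V → ℝ) (f g : AddMonoidAlgebra ℂ V) : ℂ :=
  ∫ t, (starRingEnd ℂ) (T.evalF f t) * T.evalF g t * ((T.deltaK k t : ℝ) : ℂ) ∂μ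

/-- The defining property of the nonsymmetric Jacobi polynomial `E(λ,k)`:
`E = e^λ + Σ_{μ <_∅ λ} c_μ e^μ` and `(E, e^μ)_k = 0` for all `μ <_∅ λ`. -/
def IsNonsymJacobi (T : TorusData D A μ) (k : V → ℝ) (lam : V)
    (E : AddMonoidAlgebra ℂ V) : Prop :=
  (∃ c : V →₀ ℂ, c lam = 1 ∧
      (∀ mu ∈ c.support, mu ∈ D.P ∧ (mu = lam ∨ D.ltEmpty mu lam)) ∧
      E = Finsupp.sum c fun mu a => a • expw mu) ∧
  ∀ mu ∈ D.P, D.ltEmpty mu lam → T.ipk k E (expw mu) = 0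

/-- The defining property of the Jacobi polynomial `p_I(λ,k)`:
`p ∈ ℂ[P]^{W_I}`, `p = m_I(λ) + Σ_{μ <_I λ} c_μ m_I(μ)`, and `(p, m_I(μ))_k = 0` for
all `μ <_I λ`. -/
def IsJacobiI (T : TorusData D A μ) (I : Finset V) (k : V → ℝ) (lam : V)
    (p : AddMonoidAlgebra ℂ V) : Prop :=
  p ∈ D.invSet (D.WeylP I) ∧
  (∃ c : V →₀ ℂ, c lam = 1 ∧
      (∀ mu ∈ c.support, mu ∈ D.PplusI I ∧ (mu = lam ∨ D.ltI I mu lam)) ∧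
      p = Finsupp.sum c fun mu a => a • D.mI I mu) ∧
  ∀ mu ∈ D.PplusI I, D.ltI I mu lam → T.ipk k p (D.mI I mu) = 0

end TorusData

/-!
Put `Λ = λ_v + σ` and `Λ' = λ_u + τ`; both are dominant and `(v u⁻¹) Λ' = Λ`.
The Steinberg weight is built so that `v⁻¹` keeps positive every positive root orthogonal
to `Λ`: such a root is a nonnegative combination of simple roots `α` orthogonal to `Λ`,
hence with `(λ_v, α) = 0`, i.e. `v⁻¹ α > 0`. If `v u⁻¹` sent a positive root `γ` to a
negative one, dominance would force `(Λ', γ) = (Λ, -v u⁻¹ γ) = 0`, and then both `u⁻¹ γ`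
and `v⁻¹(-v u⁻¹ γ) = -u⁻¹ γ` would be positive. So `v u⁻¹` maps `R⁺` into `R⁺`, which by
the exchange condition forces `v u⁻¹ = 1`; then `u = v` and `σ = τ`.
-/

variable {E : Type*} [NormedAddCommGroup E] [InnerProductSpace ℝ E]

lemma rRefl_apply (α x : E) : rRefl α x = x - (2 * ⟪x, α⟫ / ⟪α, α⟫) • α := by
  rw [rRefl, Submodule.reflection_apply, Submodule.starProjection_orthogonal_val,
    Submodule.starProjection_singleton, real_inner_comm α x, ← real_inner_self_eq_norm_sq]
  module

lemma rRefl_self (α : E) : rRefl α α = -α :=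
  Submodule.reflection_orthogonalComplement_singleton_eq_neg α

lemma rRefl_inv (α : E) : (rRefl α)⁻¹ = rRefl α := Submodule.reflection_inv

lemma rRefl_mul_self (α : E) : rRefl α * rRefl α = 1 := Submodule.reflection_mul_reflection _

lemma rRefl_smul {c : ℝ} (hc : c ≠ 0) (α : E) : rRefl (c • α) = rRefl α := by
  simp only [rRefl, Submodule.span_singleton_smul_eq (IsUnit.mk0 c hc)]

lemma rRefl_map (g : E ≃ₗᵢ[ℝ] E) (α : E) : rRefl (g α) = g * rRefl α * g⁻¹ := by
  ext x
  obtain ⟨y, rfl⟩ := g.surjective x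
  simp [rRefl_apply, LinearIsometryEquiv.coe_mul, LinearIsometryEquiv.coe_inv]

namespace RootData

variable {D : RootData E}

lemma inner_self_pos {α : E} (hα : α ∈ D.R) : 0 < ⟪α, α⟫ :=
  real_inner_self_pos.2 (D.nonzero α hα)

lemma neg_mem_Rpos {β : E} (hβ : β ∈ D.R) (h : β ∉ D.Rpos) : -β ∈ D.Rpos :=
  not_not.1 (mt (D.pos_or_neg β hβ).2 h)

lemma neg_notMem_Rpos {β : E} (hβ : β ∈ D.Rpos) : -β ∉ D.Rpos :=
  (D.pos_or_neg β (D.pos_subset hβ)).1 hβ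

lemma mem_R_of_mem_Pi {α : E} (hα : α ∈ D.Pi) : α ∈ D.R :=
  D.pos_subset (D.simple_subset hα)

lemma rRefl_apply_mem_R {α β : E} (hα : α ∈ D.R) (hβ : β ∈ D.R) : rRefl α β ∈ D.R := by
  rw [rRefl_apply]
  exact D.reflect_mem α hα β hβ

lemma inner_fw {α β : E} (hα : α ∈ D.Pi) (hβ : β ∈ D.Pi) :
    ⟪D.fw α, β⟫ = if α = β then ⟪β, β⟫ / 2 else 0 := by
  have h := D.fw_prop α hα β hβ
  have hβ0 := (inner_self_pos (mem_R_of_mem_Pi hβ)).ne'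
  rw [real_inner_smul_right] at h
  split_ifs at h ⊢ with hαβ
  · field_simp at h
    linarith
  · exact (mul_eq_zero.1 h).resolve_left (by positivity)

lemma inner_fw_sum {δ : E} (hδ : δ ∈ D.Pi) (c : E → ℝ) :
    ⟪D.fw δ, ∑ β ∈ D.Pi, c β • β⟫ = c δ * (⟪δ, δ⟫ / 2) := by
  rw [inner_sum, Finset.sum_eq_single_of_mem δ hδ]
  · rw [real_inner_smul_right, inner_fw hδ hδ, if_pos rfl]
  · intro β hβ hβδ
    rw [real_inner_smul_right, inner_fw hδ hβ, if_neg (Ne.symm hβδ), mul_zero]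

lemma inner_fw_nonneg {δ γ : E} (hδ : δ ∈ D.Pi) (hγ : γ ∈ D.Rpos) : 0 ≤ ⟪D.fw δ, γ⟫ := by
  obtain ⟨c, hc, rfl⟩ := D.pos_comb γ hγ
  rw [inner_fw_sum hδ]
  have := inner_self_pos (mem_R_of_mem_Pi hδ)
  have := hc δ
  positivity

def fwSum (D : RootData E) : E := ∑ α ∈ D.Pi, D.fw α

lemma inner_fwSum_pos {γ : E} (hγ : γ ∈ D.Rpos) : 0 < ⟪D.fwSum, γ⟫ := by
  obtain ⟨c, hc, hγc⟩ := D.pos_comb γ hγ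
  have hterm : ∀ δ ∈ D.Pi, 0 ≤ ⟪D.fw δ, γ⟫ := fun δ hδ => inner_fw_nonneg hδ hγ
  rw [fwSum, sum_inner]
  refine (Finset.sum_nonneg hterm).lt_of_ne fun hsum => D.nonzero γ (D.pos_subset hγ) ?_
  rw [hγc]
  refine Finset.sum_eq_zero fun δ hδ => ?_
  have hzero := (Finset.sum_eq_zero_iff_of_nonneg hterm).1 hsum.symm δ hδ
  rw [hγc, inner_fw_sum hδ] at hzero
  have hcδ : c δ = 0 := by
    have := inner_self_pos (mem_R_of_mem_Pi hδ)
    rcases mul_eq_zero.1 hzero with h | h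
    · exact h
    · linarith
  rw [hcδ, zero_smul]

lemma mem_Rpos_of_inner_fwSum_nonneg {β : E} (hβ : β ∈ D.R) (h : 0 ≤ ⟪D.fwSum, β⟫) :
    β ∈ D.Rpos := by
  by_contra hβpos
  have := inner_fwSum_pos (neg_mem_Rpos hβ hβpos)
  rw [inner_neg_right] at this
  linarith

/-- A simple reflection `s_α` permutes the positive roots that are not multiples of `α`. -/
lemma exists_eq_smul_of_rRefl_apply_notMem_Rpos {α γ : E} (hα : α ∈ D.Pi) (hγ : γ ∈ D.Rpos)
    (h : rRefl α γ ∉ D.Rpos) : ∃ c : ℝ, γ = c • α := by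
  have hsγ := neg_mem_Rpos (rRefl_apply_mem_R (mem_R_of_mem_Pi hα) (D.pos_subset hγ)) h
  obtain ⟨c, hc, hγc⟩ := D.pos_comb γ hγ
  refine ⟨c α, hγc.trans (Finset.sum_eq_single_of_mem α hα fun δ hδ hδα => ?_)⟩
  have hfw : ⟪D.fw δ, -rRefl α γ⟫ = -⟪D.fw δ, γ⟫ := by
    rw [inner_neg_right, rRefl_apply, inner_sub_right, real_inner_smul_right, inner_fw hδ hα,
      if_neg hδα, mul_zero, sub_zero]
  have hzero : ⟪D.fw δ, γ⟫ = 0 :=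
    le_antisymm (by linarith [inner_fw_nonneg hδ hsγ]) (inner_fw_nonneg hδ hγ)
  rw [hγc, inner_fw_sum hδ] at hzero
  have := inner_self_pos (mem_R_of_mem_Pi hδ)
  rw [(mul_eq_zero.1 hzero).resolve_right (by positivity), zero_smul]

lemma exists_prod_map_rRefl_eq {w : E ≃ₗᵢ[ℝ] E} (hw : w ∈ D.Weyl) :
    ∃ l : List E, (∀ α ∈ l, α ∈ D.Pi) ∧ (l.map rRefl).prod = w := by
  induction hw using Subgroup.closure_induction_left with
  | one => exact ⟨[], by simp, rfl⟩
  | mul_left x hx y _ ih =>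
    obtain ⟨α, hα, rfl⟩ := hx
    obtain ⟨l, hl, rfl⟩ := ih
    exact ⟨α :: l, List.forall_mem_cons.2 ⟨hα, hl⟩, rfl⟩
  | inv_mul_cancel x hx y _ ih =>
    obtain ⟨α, hα, rfl⟩ := hx
    obtain ⟨l, hl, rfl⟩ := ih
    exact ⟨α :: l, List.forall_mem_cons.2 ⟨hα, hl⟩, by simp [rRefl_inv]⟩

lemma prod_map_rRefl_apply_mem_R {l : List E} (hl : ∀ α ∈ l, α ∈ D.Pi) {β : E}
    (hβ : β ∈ D.R) : (l.map rRefl).prod β ∈ D.R := by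
  induction l with
  | nil => exact hβ
  | cons α t ih =>
    simp only [List.forall_mem_cons] at hl
    exact rRefl_apply_mem_R (mem_R_of_mem_Pi hl.1) (ih hl.2)

lemma apply_mem_R {w : E ≃ₗᵢ[ℝ] E} (hw : w ∈ D.Weyl) {β : E} (hβ : β ∈ D.R) : w β ∈ D.R := by
  obtain ⟨l, hl, rfl⟩ := exists_prod_map_rRefl_eq hw
  exact prod_map_rRefl_apply_mem_R hl hβ

/-- The exchange condition. -/
lemma exists_sublist_of_prod_map_rRefl_apply_notMem_Rpos {l : List E}
    (hl : ∀ α ∈ l, α ∈ D.Pi) {γ : E} (hγ : γ ∈ D.Rpos)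
    (h : (l.map rRefl).prod γ ∉ D.Rpos) :
    ∃ l' : List E, l'.Sublist l ∧ l'.length + 1 = l.length ∧
      (l.map rRefl).prod * rRefl γ = (l'.map rRefl).prod := by
  induction l with
  | nil => exact absurd hγ h
  | cons α t ih =>
    simp only [List.forall_mem_cons] at hl
    simp only [List.map_cons, List.prod_cons] at h ⊢
    set T := (t.map rRefl).prod
    by_cases hTγ : T γ ∈ D.Rpos
    · obtain ⟨c, hc⟩ := exists_eq_smul_of_rRefl_apply_notMem_Rpos hl.1 hTγ h
      have hc0 : c ≠ 0 := by
        rintro rfl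
        exact D.nonzero _ (D.pos_subset hTγ) (by rw [hc, zero_smul])
      have hconj : T * rRefl γ = rRefl α * T := by
        rw [← rRefl_smul hc0 α, ← hc, rRefl_map, inv_mul_cancel_right]
      refine ⟨t, List.sublist_cons_self α t, rfl, ?_⟩
      rw [mul_assoc, hconj, ← mul_assoc, rRefl_mul_self, one_mul]
    · obtain ⟨t', ht', hlen, hprod⟩ := ih hl.2 hTγ
      exact ⟨α :: t', ht'.cons_cons α, by simp [hlen], by
        rw [List.map_cons, List.prod_cons, mul_assoc, hprod]⟩

lemma prod_map_rRefl_eq_one_of_forall_apply_mem_Rpos {l : List E} (hl : ∀ α ∈ l, α ∈ D.Pi)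
    (h : ∀ γ ∈ D.Rpos, (l.map rRefl).prod γ ∈ D.Rpos) : (l.map rRefl).prod = 1 := by
  induction hn : l.length using Nat.strong_induction_on generalizing l with | _ n ih
  rcases l.eq_nil_or_concat' with rfl | ⟨t, α, rfl⟩
  · rfl
  simp only [List.forall_mem_append, List.forall_mem_singleton] at hl
  obtain ⟨ht, hα⟩ := hl
  have hTα : (t.map rRefl).prod α ∉ D.Rpos := by
    have := h α (D.simple_subset hα)
    simp only [List.map_append, List.map_singleton, List.prod_append, List.prod_singleton,
      LinearIsometryEquiv.coe_mul, Function.comp_apply, rRefl_self, map_neg] at this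
    exact fun hpos => neg_notMem_Rpos hpos this
  obtain ⟨t', ht', hlen, hprod⟩ :=
    exists_sublist_of_prod_map_rRefl_apply_notMem_Rpos ht (D.simple_subset hα) hTα
  have hprod' : ((t ++ [α]).map rRefl).prod = (t'.map rRefl).prod := by
    simpa using hprod
  rw [hprod'] at h ⊢
  exact ih t'.length (by simp only [List.length_append, List.length_singleton] at hn; omega) (fun β hβ => ht β (ht'.subset hβ)) h rfl

lemma eq_one_of_forall_apply_mem_Rpos {w : E ≃ₗᵢ[ℝ] E} (hw : w ∈ D.Weyl)
    (h : ∀ γ ∈ D.Rpos, w γ ∈ D.Rpos) : w = 1 := by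
  obtain ⟨l, hl, rfl⟩ := exists_prod_map_rRefl_eq hw
  exact prod_map_rRefl_eq_one_of_forall_apply_mem_Rpos hl h

lemma inner_steinberg_of_mem_Pi (v : E ≃ₗᵢ[ℝ] E) {α : E} (hα : α ∈ D.Pi) :
    ⟪D.steinberg v, α⟫ = if v⁻¹ α ∈ D.Rpos then 0 else ⟪α, α⟫ / 2 := by
  rw [steinberg, sum_inner, Finset.sum_congr rfl fun β hβ => inner_fw (Finset.mem_filter.1 hβ).1 hα,
    Finset.sum_ite_eq']
  simp only [Finset.mem_filter, hα, true_and, ite_not]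

lemma steinberg_dominant (v : E ≃ₗᵢ[ℝ] E) : D.Dominant (D.steinberg v) := fun _ hγ => by
  rw [steinberg, sum_inner]
  exact Finset.sum_nonneg fun _ hβ => inner_fw_nonneg (Finset.mem_filter.1 hβ).1 hγ

lemma Dominant.add {x y : E} (hx : D.Dominant x) (hy : D.Dominant y) : D.Dominant (x + y) :=
  fun γ hγ => by
    rw [inner_add_left]
    exact add_nonneg (hx γ hγ) (hy γ hγ)

lemma inv_apply_mem_Rpos_of_inner_steinberg_eq_zero (v : E ≃ₗᵢ[ℝ] E) {α : E} (hα : α ∈ D.Pi)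
    (h : ⟪D.steinberg v, α⟫ = 0) : v⁻¹ α ∈ D.Rpos := by
  by_contra hneg
  rw [inner_steinberg_of_mem_Pi v hα, if_neg hneg] at h
  linarith [inner_self_pos (mem_R_of_mem_Pi hα)]

lemma inv_apply_mem_Rpos_of_inner_eq_zero {v : E ≃ₗᵢ[ℝ] E} (hv : v ∈ D.Weyl) {σ : E}
    (hσ : D.Dominant σ) {γ : E} (hγ : γ ∈ D.Rpos) (h : ⟪D.steinberg v + σ, γ⟫ = 0) :
    v⁻¹ γ ∈ D.Rpos := by
  have hdom := (steinberg_dominant v).add hσ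
  obtain ⟨c, hc, rfl⟩ := D.pos_comb γ hγ
  have hterm : ∀ β ∈ D.Pi, 0 ≤ c β * ⟪D.steinberg v + σ, β⟫ :=
    fun β hβ => mul_nonneg (hc β) (hdom β (D.simple_subset hβ))
  simp only [inner_sum, real_inner_smul_right] at h
  have hsimple : ∀ β ∈ D.Pi, 0 ≤ c β * ⟪D.fwSum, v⁻¹ β⟫ := by
    intro β hβ
    rcases (hc β).eq_or_lt with hcβ | hcβ
    · rw [← hcβ, zero_mul]
    have hβ0 := (mul_eq_zero.1 ((Finset.sum_eq_zero_iff_of_nonneg hterm).1 h β hβ)).resolve_left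
      hcβ.ne'
    rw [inner_add_left] at hβ0
    have hvβ : ⟪D.steinberg v, β⟫ = 0 := by
      linarith [steinberg_dominant v β (D.simple_subset hβ), hσ β (D.simple_subset hβ)]
    exact mul_nonneg hcβ.le
      (inner_fwSum_pos (inv_apply_mem_Rpos_of_inner_steinberg_eq_zero v hβ hvβ)).le
  refine mem_Rpos_of_inner_fwSum_nonneg (apply_mem_R (inv_mem hv) (D.pos_subset hγ)) ?_
  simp only [map_sum, map_smul, inner_sum, real_inner_smul_right]
  exact Finset.sum_nonneg hsimple

lemma mul_inv_apply_mem_Rpos {u v : E ≃ₗᵢ[ℝ] E} (hu : u ∈ D.Weyl) (hv : v ∈ D.Weyl)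
    {σ τ : E} (hσ : D.Dominant σ) (hτ : D.Dominant τ)
    (heq : v⁻¹ (D.steinberg v + σ) = u⁻¹ (D.steinberg u + τ)) {γ : E} (hγ : γ ∈ D.Rpos) :
    (v * u⁻¹) γ ∈ D.Rpos := by
  by_contra hneg
  set β := (v * u⁻¹) γ
  have hβ := neg_mem_Rpos (apply_mem_R (mul_mem hv (inv_mem hu)) (D.pos_subset hγ)) hneg
  have hinner : ⟪D.steinberg v + σ, -β⟫ = -⟪D.steinberg u + τ, γ⟫ := by
    calc ⟪D.steinberg v + σ, -β⟫ = -⟪v⁻¹ (D.steinberg v + σ), u⁻¹ γ⟫ := by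
          rw [inner_neg_right, ← v.inner_map_map (v⁻¹ _) (u⁻¹ γ)]
          simp only [LinearIsometryEquiv.coe_inv, LinearIsometryEquiv.apply_symm_apply]
          rfl
      _ = -⟪D.steinberg u + τ, γ⟫ := by rw [heq, u⁻¹.inner_map_map]
  have hvβ := ((steinberg_dominant v).add hσ) _ hβ
  have huγ := ((steinberg_dominant u).add hτ) _ hγ
  have hu' := inv_apply_mem_Rpos_of_inner_eq_zero hu hτ hγ (by linarith)
  have hv' := inv_apply_mem_Rpos_of_inner_eq_zero hv hσ hβ (by linarith)
  exact neg_notMem_Rpos hu' (by simpa [β] using hv')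

end RootData

/-- The subsets `v⁻¹(λ_v + P^+)` of the weight lattice `P`, as `v`
ranges over `W`, are pairwise disjoint: if `v⁻¹(λ_v + σ) = u⁻¹(λ_u + τ)` with
`u, v ∈ W` and `σ, τ ∈ P^+`, then `u = v` and `σ = τ`. -/
theorem statement_1 (D : RootData V) :
    ∀ u ∈ D.Weyl, ∀ v ∈ D.Weyl, ∀ σ ∈ D.Pplus, ∀ τ ∈ D.Pplus,
      v⁻¹ (D.steinberg v + σ) = u⁻¹ (D.steinberg u + τ) → u = v ∧ σ = τ := by
  intro u hu v hv σ hσ τ hτ heq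
  have hvu : v * u⁻¹ = 1 := D.eq_one_of_forall_apply_mem_Rpos (mul_mem hv (inv_mem hu))
    fun γ hγ => D.mul_inv_apply_mem_Rpos hu hv hσ.2 hτ.2 heq hγ
  obtain rfl : u = v := (mul_inv_eq_one.1 hvu).symm
  exact ⟨rfl, add_left_cancel (u⁻¹.injective heq)⟩
end
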